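/- arXiv:2106.05724 — 2 statements merged into one kernel-verified Lean document; each statement's English description precedes it below -/
import Mathlib

section
/- Let μ₀ and μ̂ₙ be probability measures with W₁(μ₀, μ̂ₙ) ≤ εₙ, let c(z,y) be L-Lipschitz in y for every z ∈ Z (with L uniform over z), and define J* = inf_{z∈Z} E_{μ₀}[c(z,Y)] and Ĵₙ = inf_{z∈Z} sup_{μ : W₁(μ̂ₙ, μ) ≤ εₙ} E_μ[c(z,Y)]. Then J* ≤ Ĵₙ ≤ J* + 2 L εₙ, so |Ĵₙ − J*| ≤ 2 L εₙ. -/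
open MeasureTheory

/-- The type-`p` Wasserstein distance. -/
noncomputable def Wp {E : Type*} [MeasurableSpace E] [PseudoEMetricSpace E]
    (p : ℝ) (μ ν : Measure E) : ENNReal :=
  ⨅ (π : Measure (E × E)) (_ : π.map Prod.fst = μ ∧ π.map Prod.snd = ν),
    (∫⁻ q, edist q.1 q.2 ^ p ∂π) ^ (1 / p)

lemma Wp_symm {E : Type*} [MeasurableSpace E] [PseudoEMetricSpace E]
    (p : ℝ) (μ ν : Measure E) : Wp p ν μ ≤ Wp p μ ν := by
  refine le_iInf₂ fun π hπ => ?_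
  refine iInf₂_le_of_le (π.map (MeasurableEquiv.prodComm : E × E ≃ᵐ E × E)) ?_ (le_of_eq ?_)
  · constructor
    · rw [Measure.map_map measurable_fst
        (MeasurableEquiv.prodComm : E × E ≃ᵐ E × E).measurable]
      exact hπ.2
    · rw [Measure.map_map measurable_snd
        (MeasurableEquiv.prodComm : E × E ≃ᵐ E × E).measurable]
      exact hπ.1
  · congr 1
    rw [lintegral_map_equiv]
    simp [MeasurableEquiv.prodComm, edist_comm]

lemma Wp_self_zero {E : Type*} [MeasurableSpace E] [PseudoEMetricSpace E]
    (μ : Measure E) [IsProbabilityMeasure μ] :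
    Wp 1 μ μ = 0 := by
  have hm : Measurable fun x : E => (x, x) := measurable_id.prodMk measurable_id
  refine le_antisymm ?_ zero_le
  refine iInf₂_le_of_le (μ.map (fun x => (x, x))) ?_ ?_
  · constructor
    · rw [Measure.map_map measurable_fst hm,
        show (Prod.fst ∘ fun x : E => (x, x)) = id from rfl, Measure.map_id]
    · rw [Measure.map_map measurable_snd hm,
        show (Prod.snd ∘ fun x : E => (x, x)) = id from rfl, Measure.map_id]
  · simp only [show (1:ℝ)/1 = 1 by norm_num, ENNReal.rpow_one]
    refine le_trans (lintegral_map_le _ (fun x : E => (x, x))) ?_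
    simp

lemma lip_integral_diff_le {E : Type*} [MeasurableSpace E] [PseudoMetricSpace E] [BorelSpace E]
    (μ ν : Measure E) [IsProbabilityMeasure μ] [IsProbabilityMeasure ν]
    (f : E → ℝ) (L : ℝ) (hL : 0 ≤ L) (hf : LipschitzWith (Real.toNNReal L) f)
    (hfμ : Integrable f μ) (hfν : Integrable f ν)
    {ε : ℝ} (hε : 0 ≤ ε) (hW : Wp 1 μ ν ≤ ENNReal.ofReal ε) :
    |∫ y, f y ∂μ - ∫ y, f y ∂ν| ≤ L * ε := by
  refine le_of_forall_pos_le_add fun δ hδ => ?_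
  set δ' : ℝ := δ / (L + 1) with hδ'def
  have hδ' : 0 < δ' := div_pos hδ (by linarith)
  have hlt : Wp 1 μ ν < ENNReal.ofReal ε + ENNReal.ofReal δ' :=
    lt_of_le_of_lt hW (ENNReal.lt_add_right ENNReal.ofReal_ne_top
      (ENNReal.ofReal_pos.2 hδ').ne')
  simp only [Wp, show (1:ℝ)/1 = 1 by norm_num, ENNReal.rpow_one, iInf_lt_iff] at hlt
  obtain ⟨π, ⟨hπ1, hπ2⟩, hcost⟩ := hlt
  have hfm : Measurable f := hf.continuous.measurable
  have h1 : ∫ y, f y ∂μ = ∫ q : E × E, f q.1 ∂π := by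
    rw [← hπ1, integral_map measurable_fst.aemeasurable hfm.aestronglyMeasurable]
  have h2 : ∫ y, f y ∂ν = ∫ q : E × E, f q.2 ∂π := by
    rw [← hπ2, integral_map measurable_snd.aemeasurable hfm.aestronglyMeasurable]
  have hi1 : Integrable (fun q : E × E => f q.1) π := by
    rw [← hπ1] at hfμ
    exact (integrable_map_measure hfm.aestronglyMeasurable measurable_fst.aemeasurable).mp hfμ
  have hi2 : Integrable (fun q : E × E => f q.2) π := by
    rw [← hπ2] at hfν
    exact (integrable_map_measure hfm.aestronglyMeasurable measurable_snd.aemeasurable).mp hfν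
  have hLc : ((Real.toNNReal L : NNReal) : ℝ) = L := Real.coe_toNNReal L hL
  have hpt : ∀ q : E × E, ENNReal.ofReal |f q.1 - f q.2| ≤ ENNReal.ofReal L * edist q.1 q.2 := by
    intro q
    rw [edist_dist, ← ENNReal.ofReal_mul hL]
    refine ENNReal.ofReal_le_ofReal ?_
    have := hf.dist_le_mul q.1 q.2
    rwa [Real.dist_eq, hLc] at this
  have habs : |∫ y, f y ∂μ - ∫ y, f y ∂ν| ≤ ∫ q : E × E, |f q.1 - f q.2| ∂π := by
    rw [h1, h2, ← integral_sub hi1 hi2]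
    simpa [Real.norm_eq_abs] using
      norm_integral_le_integral_norm (fun q : E × E => f q.1 - f q.2) (μ := π)
  have heq : ∫ q : E × E, |f q.1 - f q.2| ∂π
      = (∫⁻ q : E × E, ENNReal.ofReal |f q.1 - f q.2| ∂π).toReal :=
    integral_eq_lintegral_of_nonneg_ae (ae_of_all _ fun q => abs_nonneg _)
      ((hi1.sub hi2).abs.aestronglyMeasurable)
  have hfin : ENNReal.ofReal L * (ENNReal.ofReal ε + ENNReal.ofReal δ') ≠ ⊤ := by
    finiteness
  have hle : (∫⁻ q : E × E, ENNReal.ofReal |f q.1 - f q.2| ∂π)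
      ≤ ENNReal.ofReal L * (ENNReal.ofReal ε + ENNReal.ofReal δ') := by
    calc ∫⁻ q : E × E, ENNReal.ofReal |f q.1 - f q.2| ∂π
        ≤ ∫⁻ q : E × E, ENNReal.ofReal L * edist q.1 q.2 ∂π := lintegral_mono hpt
      _ = ENNReal.ofReal L * ∫⁻ q : E × E, edist q.1 q.2 ∂π :=
          lintegral_const_mul' _ _ ENNReal.ofReal_ne_top
      _ ≤ ENNReal.ofReal L * (ENNReal.ofReal ε + ENNReal.ofReal δ') := by
          exact mul_le_mul_right hcost.le _
  have : |∫ y, f y ∂μ - ∫ y, f y ∂ν| ≤ L * (ε + δ') := by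
    refine le_trans habs ?_
    rw [heq]
    calc (∫⁻ q : E × E, ENNReal.ofReal |f q.1 - f q.2| ∂π).toReal
        ≤ (ENNReal.ofReal L * (ENNReal.ofReal ε + ENNReal.ofReal δ')).toReal :=
          ENNReal.toReal_mono hfin hle
      _ = L * (ε + δ') := by
          rw [← ENNReal.ofReal_add hε hδ'.le, ← ENNReal.ofReal_mul hL,
            ENNReal.toReal_ofReal (by positivity)]
  have hLd : L * δ' ≤ δ := by
    rw [hδ'def, mul_div_assoc']
    rw [div_le_iff₀ (by linarith : (0:ℝ) < L + 1)]
    nlinarith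
  nlinarith [this]

/-- with `W₁(μ₀, μ̂ₙ) ≤ εₙ` and `c(z,·)` uniformly `L`-Lipschitz, if
`J* = inf_{z∈Z} E_{μ₀}[c(z,Y)]`, `S(z) = sup_{μ : W₁(μ̂ₙ,μ)≤εₙ} E_μ[c(z,Y)]`, and
`Ĵₙ = inf_{z∈Z} S(z)`, then `J* ≤ Ĵₙ ≤ J* + 2Lεₙ`. -/
theorem dro_value_convergence_bound
    {E Z : Type*} [MeasurableSpace E] [PseudoMetricSpace E] [BorelSpace E]
    (μ₀ μhat : Measure E) [IsProbabilityMeasure μ₀] [IsProbabilityMeasure μhat]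
    (Zfeas : Set Z) (hZ : Zfeas.Nonempty)
    (c : Z → E → ℝ) (L : ℝ) (hL : 0 ≤ L)
    (hlip : ∀ z ∈ Zfeas, LipschitzWith (Real.toNNReal L) (c z))
    (ε : ℝ) (hε : 0 < ε)
    (hball : Wp 1 μ₀ μhat ≤ ENNReal.ofReal ε)
    (hint : ∀ z ∈ Zfeas, ∀ μ : Measure E, IsProbabilityMeasure μ →
      Wp 1 μhat μ ≤ ENNReal.ofReal ε → Integrable (c z) μ)
    (hint₀ : ∀ z ∈ Zfeas, Integrable (c z) μ₀)
    (S : Z → ℝ)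
    (hS : ∀ z ∈ Zfeas, IsLUB {r : ℝ | ∃ μ : Measure E, IsProbabilityMeasure μ ∧
        Wp 1 μhat μ ≤ ENNReal.ofReal ε ∧ r = ∫ y, c z y ∂μ} (S z))
    (Jstar Jn : ℝ)
    (hJstar : IsGLB {r : ℝ | ∃ z ∈ Zfeas, r = ∫ y, c z y ∂μ₀} Jstar)
    (hJn : IsGLB {r : ℝ | ∃ z ∈ Zfeas, r = S z} Jn) :
    Jstar ≤ Jn ∧ Jn ≤ Jstar + 2 * L * ε := by
  -- μhat is in its own ball, μ₀ is in the ball around μhat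
  have hhat_ball : Wp 1 μhat μhat ≤ ENNReal.ofReal ε := by
    rw [Wp_self_zero]; exact zero_le
  have hsym : Wp 1 μhat μ₀ ≤ ENNReal.ofReal ε := le_trans (Wp_symm 1 μ₀ μhat) hball
  have hint_hat : ∀ z ∈ Zfeas, Integrable (c z) μhat :=
    fun z hz => hint z hz μhat inferInstance hhat_ball
  -- distance between E_μ₀ and E_μhat
  have hhat₀ : ∀ z ∈ Zfeas, |∫ y, c z y ∂μhat - ∫ y, c z y ∂μ₀| ≤ L * ε := fun z hz =>
    lip_integral_diff_le μhat μ₀ (c z) L hL (hlip z hz) (hint_hat z hz) (hint₀ z hz)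
      hε.le hsym
  constructor
  · -- lower bound
    refine hJn.2 fun r hr => ?_
    obtain ⟨z, hz, rfl⟩ := hr
    refine le_trans (hJstar.1 ⟨z, hz, rfl⟩) ?_
    exact (hS z hz).1 ⟨μ₀, inferInstance, hsym, rfl⟩
  · -- upper bound
    have key : ∀ z ∈ Zfeas, Jn ≤ (∫ y, c z y ∂μ₀) + 2 * L * ε := by
      intro z hz
      have hSle : S z ≤ (∫ y, c z y ∂μ₀) + 2 * L * ε := by
        refine (hS z hz).2 fun r hr => ?_
        obtain ⟨μ, hμp, hμball, rfl⟩ := hr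
        have h1 : |∫ y, c z y ∂μhat - ∫ y, c z y ∂μ| ≤ L * ε :=
          lip_integral_diff_le μhat μ (c z) L hL (hlip z hz) (hint_hat z hz)
            (hint z hz μ hμp hμball) hε.le hμball
        have h2 := hhat₀ z hz
        have := abs_le.1 h1
        have := abs_le.1 h2
        linarith
      calc Jn ≤ S z := hJn.1 ⟨z, hz, rfl⟩
        _ ≤ (∫ y, c z y ∂μ₀) + 2 * L * ε := hSle
    have : Jn - 2 * L * ε ≤ Jstar := by
      refine hJstar.2 fun r hr => ?_
      obtain ⟨z, hz, rfl⟩ := hr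
      linarith [key z hz]
    linarith
end

section
/- Weighted Hölder step in the gradient-regularization lower bound: for weights wᵢ ≥ 0 with Σwᵢ = 1, vectors gᵢ ∈ ℝ^d, points ξᵢ, yᵢ with (Σᵢ wᵢ ‖ξᵢ − yᵢ‖_p^p)^{1/p} ≤ ε, one has Σᵢ wᵢ ‖gᵢ‖_{p*} ‖ξᵢ − yᵢ‖_p ≤ ε (Σᵢ wᵢ ‖gᵢ‖_{p*}^{p*})^{1/p*}, where p* is the Hölder conjugate of p ∈ (1, ∞). Moreover, equality is achievable by a suitable choice of the ξᵢ when Y = ℝ^d. -/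
open Finset

/-- The ℓ_p norm of a vector in `ℝ^d` (for a real exponent `p`). -/
noncomputable def lpNorm (d : ℕ) (p : ℝ) (v : Fin d → ℝ) : ℝ :=
  (∑ j, |v j| ^ p) ^ (1 / p)

lemma lpNorm_nonneg (d : ℕ) (p : ℝ) (v : Fin d → ℝ) : 0 ≤ lpNorm d p v :=
  Real.rpow_nonneg (Finset.sum_nonneg fun _ _ => Real.rpow_nonneg (abs_nonneg _) _) _

lemma lpNorm_zero (d : ℕ) (p : ℝ) (hp : p ≠ 0) : lpNorm d p 0 = 0 := by
  simp [lpNorm, Real.zero_rpow hp, Real.zero_rpow (inv_ne_zero hp)]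

/-- Weighted Hölder inequality for nonnegative sequences. -/
lemma weighted_holder_aux (n : ℕ) (p ps : ℝ) (hpq : Real.HolderConjugate p ps)
    (w a b : Fin n → ℝ) (hw : ∀ i, 0 ≤ w i) (ha : ∀ i, 0 ≤ a i) (hb : ∀ i, 0 ≤ b i) :
    ∑ i, w i * a i * b i
      ≤ (∑ i, w i * a i ^ ps) ^ (1 / ps) * (∑ i, w i * b i ^ p) ^ (1 / p) := by
  have hpne : p ≠ 0 := hpq.ne_zero
  have hpsne : ps ≠ 0 := hpq.symm.ne_zero
  have hconj : 1 / ps + 1 / p = 1 := by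
    have := hpq.inv_add_inv_eq_one
    rw [← one_div, ← one_div] at this; linarith
  have H := Real.inner_le_Lp_mul_Lq_of_nonneg (univ : Finset (Fin n)) hpq.symm
    (f := fun i => w i ^ (1/ps) * a i) (g := fun i => w i ^ (1/p) * b i)
    (fun i _ => mul_nonneg (Real.rpow_nonneg (hw i) _) (ha i))
    (fun i _ => mul_nonneg (Real.rpow_nonneg (hw i) _) (hb i))
  have e1 : ∀ i : Fin n, (w i ^ (1/ps) * a i) * (w i ^ (1/p) * b i)
      = w i * a i * b i := by
    intro i
    have hww : w i ^ (1/ps) * w i ^ (1/p) = w i := by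
      rw [← Real.rpow_add_of_nonneg (hw i) hpq.symm.one_div_nonneg hpq.one_div_nonneg, hconj,
        Real.rpow_one]
    calc (w i ^ (1/ps) * a i) * (w i ^ (1/p) * b i)
        = (w i ^ (1/ps) * w i ^ (1/p)) * a i * b i := by ring
      _ = w i * a i * b i := by rw [hww]
  have e2 : ∀ i : Fin n, (w i ^ (1/ps) * a i) ^ ps = w i * a i ^ ps := by
    intro i
    rw [Real.mul_rpow (Real.rpow_nonneg (hw i) _) (ha i),
      ← Real.rpow_mul (hw i), one_div_mul_cancel hpsne, Real.rpow_one]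
  have e3 : ∀ i : Fin n, (w i ^ (1/p) * b i) ^ p = w i * b i ^ p := by
    intro i
    rw [Real.mul_rpow (Real.rpow_nonneg (hw i) _) (hb i),
      ← Real.rpow_mul (hw i), one_div_mul_cancel hpne, Real.rpow_one]
  calc ∑ i, w i * a i * b i
      = ∑ i, (w i ^ (1/ps) * a i) * (w i ^ (1/p) * b i) :=
        (Finset.sum_congr rfl fun i _ => e1 i).symm
    _ ≤ (∑ i, (w i ^ (1/ps) * a i) ^ ps) ^ (1/ps)
          * (∑ i, (w i ^ (1/p) * b i) ^ p) ^ (1/p) := H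
    _ = (∑ i, w i * a i ^ ps) ^ (1 / ps) * (∑ i, w i * b i ^ p) ^ (1 / p) := by
        rw [Finset.sum_congr rfl fun i _ => e2 i, Finset.sum_congr rfl fun i _ => e3 i]

/-- weighted Hölder step: for weights `wᵢ ≥ 0` summing to `1`, gradients `gᵢ`,
and points with `(Σᵢ wᵢ‖ξᵢ−yᵢ‖_p^p)^{1/p} ≤ ε`,
`Σᵢ wᵢ‖gᵢ‖_{p*}‖ξᵢ−yᵢ‖_p ≤ ε (Σᵢ wᵢ‖gᵢ‖_{p*}^{p*})^{1/p*}`, and equality is achievable by a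
suitable choice of the `ξᵢ` when `Y = ℝ^d`. -/
theorem weighted_holder_gradient_step
    (d n : ℕ) (p ps : ℝ) (hp : 1 < p) (hconj : 1 / p + 1 / ps = 1)
    (w : Fin n → ℝ) (hw : ∀ i, 0 ≤ w i) (hw1 : ∑ i, w i = 1)
    (g : Fin n → Fin d → ℝ) (ε : ℝ) (hε : 0 ≤ ε) :
    (∀ ξ y : Fin n → Fin d → ℝ,
        (∑ i, w i * lpNorm d p (ξ i - y i) ^ p) ^ (1 / p) ≤ ε →
        ∑ i, w i * lpNorm d ps (g i) * lpNorm d p (ξ i - y i)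
          ≤ ε * (∑ i, w i * lpNorm d ps (g i) ^ ps) ^ (1 / ps))
    ∧ ∀ y : Fin n → Fin d → ℝ, ∃ ξ : Fin n → Fin d → ℝ,
        (∑ i, w i * lpNorm d p (ξ i - y i) ^ p) ^ (1 / p) ≤ ε ∧
        ∑ i, w i * lpNorm d ps (g i) * lpNorm d p (ξ i - y i)
          = ε * (∑ i, w i * lpNorm d ps (g i) ^ ps) ^ (1 / ps) := by
  have hpq : Real.HolderConjugate p ps := Real.holderConjugate_iff.mpr ⟨hp, by rw [← one_div, ← one_div]; exact hconj⟩
  have hp0 : (0:ℝ) < p := hpq.pos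
  have hps : 1 < ps := (Real.holderConjugate_iff.mp hpq.symm).1
  have hps0 : (0:ℝ) < ps := hpq.symm.pos
  have hpne : p ≠ 0 := ne_of_gt hp0
  have hpsne : ps ≠ 0 := ne_of_gt hps0
  have ha : ∀ i, 0 ≤ lpNorm d ps (g i) := fun i => lpNorm_nonneg _ _ _
  have hS0 : 0 ≤ ∑ i, w i * lpNorm d ps (g i) ^ ps :=
    Finset.sum_nonneg fun i _ => mul_nonneg (hw i) (Real.rpow_nonneg (ha i) _)
  constructor
  · intro ξ y hξ
    have key := weighted_holder_aux n p ps hpq w (fun i => lpNorm d ps (g i))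
      (fun i => lpNorm d p (ξ i - y i)) hw ha (fun i => lpNorm_nonneg _ _ _)
    refine key.trans ?_
    rw [mul_comm ε]
    exact mul_le_mul_of_nonneg_left hξ (Real.rpow_nonneg hS0 _)
  · intro y
    by_cases hS : (∑ i, w i * lpNorm d ps (g i) ^ ps) = 0
    · refine ⟨y, ?_, ?_⟩
      · simp only [sub_self, lpNorm_zero d p hpne, Real.zero_rpow hpne, mul_zero,
          Finset.sum_const_zero, Real.zero_rpow (one_div_ne_zero hpne)]
        exact hε
      · simp [hS, lpNorm_zero d p hpne, Real.zero_rpow (inv_ne_zero hpsne)]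
    · have hSpos : 0 < ∑ i, w i * lpNorm d ps (g i) ^ ps := lt_of_le_of_ne hS0 (Ne.symm hS)
      have hd : 0 < d := by
        by_contra hd
        push_neg at hd
        interval_cases d
        apply hS
        refine Finset.sum_eq_zero fun i _ => ?_
        have h0 : lpNorm 0 ps (g i) = 0 := by
          simp [lpNorm, Real.zero_rpow (inv_ne_zero hpsne)]
        rw [h0, Real.zero_rpow hpsne, mul_zero]
      have h4 : (ps - 1) * p = ps := by
        have h := hconj
        field_simp at h
        linear_combination -h
      set S := ∑ i, w i * lpNorm d ps (g i) ^ ps with hSdef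
      set c : Fin n → ℝ := fun i => ε * lpNorm d ps (g i) ^ (ps - 1) / S ^ (1/p) with hc_def
      have hc : ∀ i, 0 ≤ c i := fun i =>
        div_nonneg (mul_nonneg hε (Real.rpow_nonneg (ha i) _)) (Real.rpow_nonneg hS0 _)
      set e : Fin d → ℝ := fun j => if j = ⟨0, hd⟩ then 1 else 0 with he_def
      have hnorm : ∀ i, lpNorm d p (y i + c i • e - y i) = c i := by
        intro i
        have hv : (y i + c i • e - y i) = fun j => c i * e j := by
          funext j; simp [he_def]
        rw [hv]
        unfold lpNorm
        have hterm : ∀ j : Fin d, |c i * e j| ^ p = if j = ⟨0, hd⟩ then c i ^ p else 0 := by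
          intro j
          by_cases hj : j = ⟨0, hd⟩ <;>
            simp [he_def, hj, abs_of_nonneg (hc i), Real.zero_rpow hpne]
        rw [Finset.sum_congr rfl fun j _ => hterm j, Finset.sum_ite_eq' univ _ _]
        simp only [Finset.mem_univ, if_true]
        rw [← Real.rpow_mul (hc i), mul_one_div, div_self hpne, Real.rpow_one]
      have hcp : ∀ i, c i ^ p = ε ^ p * lpNorm d ps (g i) ^ ps / S := by
        intro i
        rw [hc_def]
        rw [Real.div_rpow (mul_nonneg hε (Real.rpow_nonneg (ha i) _)) (Real.rpow_nonneg hS0 _),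
          Real.mul_rpow hε (Real.rpow_nonneg (ha i) _),
          ← Real.rpow_mul (ha i), ← Real.rpow_mul hS0, h4, one_div_mul_cancel hpne,
          Real.rpow_one]
      have hsum_cp : ∑ i, w i * lpNorm d p (y i + c i • e - y i) ^ p = ε ^ p := by
        calc ∑ i, w i * lpNorm d p (y i + c i • e - y i) ^ p
            = ∑ i, (ε ^ p / S) * (w i * lpNorm d ps (g i) ^ ps) := by
              refine Finset.sum_congr rfl fun i _ => ?_
              rw [hnorm i, hcp i]; ring
          _ = (ε ^ p / S) * S := by rw [← Finset.mul_sum]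
          _ = ε ^ p := div_mul_cancel₀ _ (ne_of_gt hSpos)
      have haa : ∀ i, lpNorm d ps (g i) * lpNorm d ps (g i) ^ (ps - 1)
          = lpNorm d ps (g i) ^ ps := by
        intro i
        rcases eq_or_lt_of_le (ha i) with h | h
        · rw [← h, Real.zero_rpow hpsne, Real.zero_rpow (show ps - 1 ≠ 0 by linarith),
            mul_zero]
        · nth_rewrite 1 [← Real.rpow_one (lpNorm d ps (g i))]
          rw [← Real.rpow_add h]
          norm_num
      have hSps : S ^ ((1:ℝ)/ps) = S / S ^ ((1:ℝ)/p) := by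
        rw [show (1:ℝ)/ps = 1 - 1/p by linarith, Real.rpow_sub hSpos, Real.rpow_one]
      refine ⟨fun i => y i + c i • e, ?_, ?_⟩
      · rw [hsum_cp, ← Real.rpow_mul hε, mul_one_div, div_self hpne, Real.rpow_one]
      · calc ∑ i, w i * lpNorm d ps (g i) * lpNorm d p (y i + c i • e - y i)
            = ∑ i, (ε / S ^ ((1:ℝ)/p)) * (w i * lpNorm d ps (g i) ^ ps) := by
              refine Finset.sum_congr rfl fun i _ => ?_
              rw [hnorm i, hc_def, ← haa i]; ring
          _ = (ε / S ^ ((1:ℝ)/p)) * S := by rw [← Finset.mul_sum]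
          _ = ε * (S / S ^ ((1:ℝ)/p)) := by ring
          _ = ε * S ^ ((1:ℝ)/ps) := by rw [hSps]
end
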